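/- Let ψ, φ be unit vectors in ℂ^d, let W be a Hermitian d×d matrix with −I ≤ W ≤ I (in the Loewner order), set X := |ψ⟩⟨ψ| − |φ⟩⟨φ| and λ := √(1 − |⟨ψ, φ⟩|²) (which equals half the trace norm of X). Then −λ(1+λ) ≤ ⟨φ, Wφ⟩ · tr(W·X), and ⟨φ, Wφ⟩ · tr(W·X) ≤ λ(1−λ) whenever 0 ≤ λ ≤ 1/2, while ⟨φ, Wφ⟩ · tr(W·X) ≤ 1/4 whenever 1/2 ≤ λ ≤ 1. -/

import Mathlib

/-!
Write `ψ = c φ + w` with `c = ⟨φ, ψ⟩` and `w ⊥ φ`, so that `‖w‖ = λ`. Only the compression of `W`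
to `span {φ, w}` matters: with `a = ⟨φ, Wφ⟩`, `σ = ⟨w, Ww⟩` and `ρ = Re (c̄ ⟨φ, Ww⟩)` one has
`⟨ψ, Wψ⟩ - a = σ - λ²a + 2ρ`, and `-1 ≤ W ≤ 1` gives `|a| ≤ 1`, `|σ| ≤ λ²` and, by Cauchy–Schwarz
for the semi-inner products of `1 ∓ W`, `ρ² ≤ (1 - λ²)(1 ∓ a)(λ² ∓ σ)`. The three bounds on
`a (σ - λ²a + 2ρ)` are then polynomial inequalities in four real variables; after the symmetry
`(a, σ, ρ) ↦ (-a, -σ, -ρ)` reduces to `λ²a + σ ≥ 0`, each follows from an explicit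
sum-of-squares certificate.
-/

open scoped BigOperators

noncomputable section

/-- `t`-fold tensor (Kronecker) power of a matrix, acting on `(ℂ^α)^{⊗t}`. -/
def tpow {α : Type*} [Fintype α] (M : Matrix α α ℂ) (t : ℕ) :
    Matrix (Fin t → α) (Fin t → α) ℂ :=
  Matrix.of fun x y => ∏ i, M (x i) (y i)

/-- The rank-one operator `|ψ⟩⟨ψ|`. -/
def rankOne {α : Type*} (ψ : α → ℂ) : Matrix α α ℂ :=
  Matrix.of fun i j => ψ i * (starRingEnd ℂ) (ψ j)

/-- The operator `U_σ` permuting the `t` tensor factors of `(ℂ^α)^{⊗t}`. -/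
def permOp (α : Type*) [DecidableEq α] {t : ℕ} (σ : Equiv.Perm (Fin t)) :
    Matrix (Fin t → α) (Fin t → α) ℂ :=
  Matrix.of fun x y => if (fun k => x (σ k)) = y then 1 else 0

/-- The projector `P_[t]` onto the symmetric subspace `Sym_t(ℂ^α)`. -/
def symProj (α : Type*) [DecidableEq α] (t : ℕ) :
    Matrix (Fin t → α) (Fin t → α) ℂ :=
  (t.factorial : ℂ)⁻¹ • ∑ σ : Equiv.Perm (Fin t), permOp α σ

open scoped ComplexOrder

theorem abs_two_mul_mul_le_of_sq_le {a ρ P R : ℝ} (hρ : ρ ^ 2 ≤ P) (hP : 4 * a ^ 2 * P ≤ R ^ 2)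
    (hR : 0 ≤ R) : |2 * a * ρ| ≤ R :=
  abs_le_of_sq_le_sq
    (by nlinarith [mul_le_mul_of_nonneg_left hρ (by positivity : 0 ≤ 4 * a ^ 2)]) hR

/-- The constraints that `-1 ≤ W ≤ 1` imposes on `a, σ, ρ` above, with `g = λ`. -/
structure CompressionBounds (a σ g ρ : ℝ) : Prop where
  neg_one_le_a : -1 ≤ a
  a_le_one : a ≤ 1
  g_nonneg : 0 ≤ g
  g_le_one : g ≤ 1
  neg_sq_le_σ : -g ^ 2 ≤ σ
  σ_le_sq : σ ≤ g ^ 2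
  sq_le_sub : ρ ^ 2 ≤ (1 - g ^ 2) * ((1 - a) * (g ^ 2 - σ))
  sq_le_add : ρ ^ 2 ≤ (1 - g ^ 2) * ((1 + a) * (g ^ 2 + σ))

namespace CompressionBounds

variable {a σ g ρ : ℝ}

theorem neg (h : CompressionBounds a σ g ρ) : CompressionBounds (-a) (-σ) g (-ρ) where
  neg_one_le_a := by linarith [h.a_le_one]
  a_le_one := by linarith [h.neg_one_le_a]
  g_nonneg := h.g_nonneg
  g_le_one := h.g_le_one
  neg_sq_le_σ := by linarith [h.σ_le_sq]
  σ_le_sq := by linarith [h.neg_sq_le_σ]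
  sq_le_sub := by simpa [sub_neg_eq_add] using h.sq_le_add
  sq_le_add := by simpa [← sub_eq_add_neg] using h.sq_le_sub

theorem expectation_le_one (h : CompressionBounds a σ g ρ) : (1 - g ^ 2) * a + σ + 2 * ρ ≤ 1 := by
  obtain ⟨-, ha, hg₀, hg₁, -, hσ, hsub, -⟩ := h
  have hx : 0 ≤ (1 - g ^ 2) * (1 - a) := mul_nonneg (by nlinarith) (by linarith)
  -- AM–GM: `2ρ ≤ x + y` whenever `ρ² ≤ x y`
  have := (abs_le.1 <| abs_two_mul_mul_le_of_sq_le (a := 1) hsub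
    (by nlinarith [sq_nonneg ((1 - g ^ 2) * (1 - a) - (g ^ 2 - σ))])
    (add_nonneg hx (sub_nonneg.2 hσ))).2
  linarith

theorem lower_of_nonneg (h : CompressionBounds a σ g ρ) (has : 0 ≤ g ^ 2 * a + σ) :
    -(g * (1 + g)) ≤ a * (σ - g ^ 2 * a + 2 * ρ) := by
  obtain ⟨ha₁, ha₂, hg₀, hg₁, hσ₁, hσ₂, hsub, -⟩ := h
  set R := g * (1 + g) + a * (σ - g ^ 2 * a)
  have hR : 0 ≤ R := by
    nlinarith [mul_nonneg hg₀ (by linarith : 0 ≤ 1 - g),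
      mul_nonneg (by linarith : 0 ≤ 1 + a) (by linarith : 0 ≤ g ^ 2 + σ),
      mul_nonneg (by linarith : 0 ≤ 1 - a) (by linarith : 0 ≤ g ^ 2 - σ),
      mul_nonneg (sq_nonneg g) (mul_nonneg (by linarith : 0 ≤ 1 - a) (by linarith : 0 ≤ 1 + a))]
  have hP : 4 * a ^ 2 * ((1 - g ^ 2) * ((1 - a) * (g ^ 2 - σ))) ≤ R ^ 2 := by
    nlinarith [sq_nonneg (g * (1 + g) - 2 * a ^ 2 * g + a * (σ + g ^ 2 * a)),
      mul_nonneg (mul_nonneg (mul_nonneg (sq_nonneg a) (by linarith : 0 ≤ 1 - g)) has)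
        (by linarith : 0 ≤ 1 + g - a)]
  have := (abs_le.1 (abs_two_mul_mul_le_of_sq_le hsub hP hR)).1
  linarith

theorem lower (h : CompressionBounds a σ g ρ) : -(g * (1 + g)) ≤ a * (σ - g ^ 2 * a + 2 * ρ) := by
  rcases le_total 0 (g ^ 2 * a + σ) with has | has
  · exact h.lower_of_nonneg has
  · have := h.neg.lower_of_nonneg (by linarith)
    linarith

theorem upper_of_nonneg (h : CompressionBounds a σ g ρ) (has : 0 ≤ g ^ 2 * a + σ)
    (hg : g ≤ 1 / 2) : a * (σ - g ^ 2 * a + 2 * ρ) ≤ g * (1 - g) := by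
  have hB := h.expectation_le_one
  obtain ⟨ha₁, ha₂, hg₀, hg₁, hσ₁, hσ₂, hsub, -⟩ := h
  rcases le_or_gt a (1 - g) with hag | hag
  · set R := g * (1 - g) - a * (σ - g ^ 2 * a)
    have hR : 0 ≤ R := by
      nlinarith [mul_nonneg hg₀ (by linarith : 0 ≤ 4 - 5 * g),
        mul_nonneg (by linarith : 0 ≤ g ^ 2 - σ) (sq_nonneg (a + 1 / 2)),
        mul_nonneg (by linarith : 0 ≤ g ^ 2 + σ) (sq_nonneg (a - 1 / 2))]
    have hP : 4 * a ^ 2 * ((1 - g ^ 2) * ((1 - a) * (g ^ 2 - σ))) ≤ R ^ 2 := by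
      nlinarith [sq_nonneg (g * (1 - g) - 2 * a ^ 2 * g - a * (σ + g ^ 2 * a)),
        mul_nonneg (mul_nonneg (mul_nonneg (sq_nonneg a) (by linarith : 0 ≤ 1 + g)) has)
          (by linarith : 0 ≤ 1 - g - a)]
    have := (abs_le.1 (abs_two_mul_mul_le_of_sq_le hsub hP hR)).2
    linarith
  -- here `a ≥ 1 - g ≥ g`, so `a (⟨ψ, Wψ⟩ - a) ≤ a (1 - a) ≤ g (1 - g)`
  · nlinarith [mul_le_mul_of_nonneg_left hB (by linarith : 0 ≤ a)]

theorem upper (h : CompressionBounds a σ g ρ) (hg : g ≤ 1 / 2) :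
    a * (σ - g ^ 2 * a + 2 * ρ) ≤ g * (1 - g) := by
  rcases le_total 0 (g ^ 2 * a + σ) with has | has
  · exact h.upper_of_nonneg has hg
  · have := h.neg.upper_of_nonneg (by linarith) hg
    linarith

theorem le_quarter (h : CompressionBounds a σ g ρ) : a * (σ - g ^ 2 * a + 2 * ρ) ≤ 1 / 4 := by
  have hB₁ := h.expectation_le_one
  have hB₂ := h.neg.expectation_le_one
  rcases le_total 0 a with ha | ha
  · nlinarith [mul_le_mul_of_nonneg_left hB₁ ha, sq_nonneg (2 * a - 1)]
  · nlinarith [mul_le_mul_of_nonneg_left hB₂ (neg_nonneg.2 ha), sq_nonneg (2 * a + 1)]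

end CompressionBounds

open Matrix ComplexConjugate

variable {n : Type*} [Fintype n]

theorem Matrix.PosSemidef.norm_star_dotProduct_mulVec_sq_le {𝕜 : Type*} [RCLike 𝕜]
    {M : Matrix n n 𝕜} (hM : M.PosSemidef) (u v : n → 𝕜) :
    ‖star u ⬝ᵥ M *ᵥ v‖ ^ 2 ≤ RCLike.re (star u ⬝ᵥ M *ᵥ u) * RCLike.re (star v ⬝ᵥ M *ᵥ v) := by
  let _ := M.toSeminormedAddCommGroup hM
  let _ := M.toInnerProductSpace hM
  have h := inner_mul_inner_self_le (𝕜 := 𝕜) u v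
  rw [norm_inner_symm v u, ← sq] at h
  exact dotProduct_comm (star u) (M *ᵥ v) ▸ dotProduct_comm (star u) (M *ᵥ u) ▸
    dotProduct_comm (star v) (M *ᵥ v) ▸ h

theorem Matrix.trace_mul_rankOne (W : Matrix n n ℂ) (v : n → ℂ) :
    (W * rankOne v).trace = star v ⬝ᵥ W *ᵥ v := by
  simp only [trace, diag_apply, mul_apply, rankOne, of_apply, dotProduct, mulVec,
    Finset.mul_sum, Pi.star_apply, RCLike.star_def]
  refine Finset.sum_congr rfl fun i _ => Finset.sum_congr rfl fun j _ => ?_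
  ring

theorem Matrix.IsHermitian.ofReal_re_star_dotProduct_mulVec {W : Matrix n n ℂ}
    (hW : W.IsHermitian) (v : n → ℂ) : ((star v ⬝ᵥ W *ᵥ v).re : ℂ) = star v ⬝ᵥ W *ᵥ v :=
  Complex.ext rfl (by simpa using (hW.im_star_dotProduct_mulVec_self v).symm)

theorem Matrix.IsHermitian.star_dotProduct_mulVec_smul_add {W : Matrix n n ℂ}
    (hW : W.IsHermitian) (c : ℂ) (u w : n → ℂ) :
    star (c • u + w) ⬝ᵥ W *ᵥ (c • u + w) = Complex.normSq c * (star u ⬝ᵥ W *ᵥ u)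
      + (2 * (conj c * (star u ⬝ᵥ W *ᵥ w)).re : ℝ) + star w ⬝ᵥ W *ᵥ w := by
  have hwu : star w ⬝ᵥ W *ᵥ u = conj (star u ⬝ᵥ W *ᵥ w) := by
    rw [starRingEnd_apply, star_dotProduct, star_mulVec, hW.eq, ← dotProduct_mulVec]
  simp only [star_add, star_smul, mulVec_add, mulVec_smul, add_dotProduct, dotProduct_add,
    smul_dotProduct, dotProduct_smul, smul_eq_mul, RCLike.star_def, hwu]
  rw [Complex.normSq_eq_conj_mul_self, Complex.ofReal_mul, Complex.re_eq_add_conj, map_mul,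
    Complex.conj_conj]
  push_cast
  ring

variable [DecidableEq n] {W : Matrix n n ℂ}

theorem Matrix.normSq_star_dotProduct_le_one {u v : n → ℂ}
    (hu : star u ⬝ᵥ u = 1) (hv : star v ⬝ᵥ v = 1) : Complex.normSq (star u ⬝ᵥ v) ≤ 1 := by
  simpa [Complex.normSq_eq_norm_sq, hu, hv] using
    PosSemidef.one.norm_star_dotProduct_mulVec_sq_le u v

theorem Matrix.re_star_dotProduct_mulVec_le_of_posSemidef_one_sub (h : (1 - W).PosSemidef)
    (v : n → ℂ) : (star v ⬝ᵥ W *ᵥ v).re ≤ (star v ⬝ᵥ v).re := by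
  have := h.re_dotProduct_nonneg v
  simp only [sub_mulVec, one_mulVec, dotProduct_sub, map_sub, RCLike.re_to_complex] at this
  linarith

theorem Matrix.normSq_star_dotProduct_mulVec_le_of_posSemidef_one_sub (h : (1 - W).PosSemidef)
    {u v : n → ℂ} (huv : star u ⬝ᵥ v = 0) :
    Complex.normSq (star u ⬝ᵥ W *ᵥ v) ≤
      (star u ⬝ᵥ u - star u ⬝ᵥ W *ᵥ u).re * (star v ⬝ᵥ v - star v ⬝ᵥ W *ᵥ v).re := by
  simpa [sub_mulVec, huv, Complex.normSq_eq_norm_sq] using h.norm_star_dotProduct_mulVec_sq_le u v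

theorem compression_le_of_posSemidef_one_sub {φ w : n → ℂ} {c : ℂ} {g : ℝ}
    (hφ : star φ ⬝ᵥ φ = 1) (hφw : star φ ⬝ᵥ w = 0) (hw : star w ⬝ᵥ w = (g ^ 2 : ℝ))
    (hc : Complex.normSq c = 1 - g ^ 2) (h : (1 - W).PosSemidef) :
    (star φ ⬝ᵥ W *ᵥ φ).re ≤ 1 ∧ (star w ⬝ᵥ W *ᵥ w).re ≤ g ^ 2 ∧
      (conj c * (star φ ⬝ᵥ W *ᵥ w)).re ^ 2 ≤
        (1 - g ^ 2) * ((1 - (star φ ⬝ᵥ W *ᵥ φ).re) * (g ^ 2 - (star w ⬝ᵥ W *ᵥ w).re)) := by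
  refine ⟨?_, ?_, ?_⟩
  · simpa only [hφ, Complex.one_re] using re_star_dotProduct_mulVec_le_of_posSemidef_one_sub h φ
  · simpa only [hw, Complex.ofReal_re] using re_star_dotProduct_mulVec_le_of_posSemidef_one_sub h w
  have hcs := normSq_star_dotProduct_mulVec_le_of_posSemidef_one_sub h hφw
  simp only [hφ, hw, Complex.sub_re, Complex.one_re, Complex.ofReal_re] at hcs
  calc (conj c * (star φ ⬝ᵥ W *ᵥ w)).re ^ 2
      ≤ Complex.normSq (conj c * (star φ ⬝ᵥ W *ᵥ w)) := by
        rw [sq]; exact Complex.re_sq_le_normSq _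
    _ = (1 - g ^ 2) * Complex.normSq (star φ ⬝ᵥ W *ᵥ w) := by
        rw [Complex.normSq_mul, Complex.normSq_conj, hc]
    _ ≤ _ := mul_le_mul_of_nonneg_left hcs (by linarith [Complex.normSq_nonneg c])

theorem exists_compressionBounds {φ ψ : n → ℂ} {g : ℝ} (hφ : star φ ⬝ᵥ φ = 1)
    (hψ : star ψ ⬝ᵥ ψ = 1) (hW : W.IsHermitian) (hle : (1 - W).PosSemidef)
    (hge : (W + 1).PosSemidef) (hg₀ : 0 ≤ g) (hg : g ^ 2 = 1 - Complex.normSq (star ψ ⬝ᵥ φ)) :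
    ∃ a σ ρ : ℝ, CompressionBounds a σ g ρ ∧ star φ ⬝ᵥ W *ᵥ φ = a ∧
      star ψ ⬝ᵥ W *ᵥ ψ = ((1 - g ^ 2) * a + σ + 2 * ρ : ℝ) := by
  set c := star φ ⬝ᵥ ψ
  have hc : Complex.normSq c = 1 - g ^ 2 := by
    rw [hg, star_dotProduct ψ φ, RCLike.star_def, Complex.normSq_conj]; ring
  set w := ψ - c • φ
  have hψw : ψ = c • φ + w := (add_sub_cancel _ _).symm
  have hφw : star φ ⬝ᵥ w = 0 := by simp [w, dotProduct_sub, hφ, c]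
  have hw : star w ⬝ᵥ w = (g ^ 2 : ℝ) := by
    have := isHermitian_one.star_dotProduct_mulVec_smul_add c φ w
    simp only [one_mulVec, ← hψw, hψ, hφ, hφw, hc, mul_zero, Complex.zero_re] at this
    push_cast at this ⊢
    linear_combination -this
  have hge' : (1 - -W).PosSemidef := by rwa [sub_neg_eq_add, add_comm]
  obtain ⟨ha₂, hσ₂, hsub⟩ := compression_le_of_posSemidef_one_sub hφ hφw hw hc hle
  obtain ⟨ha₁, hσ₁, hadd⟩ := compression_le_of_posSemidef_one_sub hφ hφw hw hc hge'
  simp only [neg_mulVec, dotProduct_neg, Complex.neg_re, mul_neg, neg_sq, sub_neg_eq_add]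
    at ha₁ hσ₁ hadd
  refine ⟨_, _, _, ⟨by linarith, ha₂, hg₀, ?_, by linarith, hσ₂, hsub, hadd⟩,
    (hW.ofReal_re_star_dotProduct_mulVec φ).symm, ?_⟩
  · nlinarith [Complex.normSq_nonneg c]
  · conv_lhs => rw [hψw, hW.star_dotProduct_mulVec_smul_add, hc,
      ← hW.ofReal_re_star_dotProduct_mulVec φ, ← hW.ofReal_re_star_dotProduct_mulVec w]
    push_cast
    ring

/-- For unit vectors `ψ, φ ∈ ℂ^d`, a Hermitian `W` with `−I ≤ W ≤ I`,
`X = |ψ⟩⟨ψ| − |φ⟩⟨φ|`, and `λ = √(1 − |⟨ψ,φ⟩|²)` (half the trace norm of `X`):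
`−λ(1+λ) ≤ ⟨φ, Wφ⟩·tr(WX)`; moreover `⟨φ, Wφ⟩·tr(WX) ≤ λ(1−λ)` when `0 ≤ λ ≤ 1/2` and
`⟨φ, Wφ⟩·tr(WX) ≤ 1/4` when `1/2 ≤ λ ≤ 1`. -/
theorem stmt15 (d : ℕ) (ψ φ : Fin d → ℂ)
    (hψ : ∑ i, (starRingEnd ℂ) (ψ i) * ψ i = 1)
    (hφ : ∑ i, (starRingEnd ℂ) (φ i) * φ i = 1)
    (W : Matrix (Fin d) (Fin d) ℂ) (hW : W.IsHermitian)
    (hWle : (1 - W).PosSemidef) (hWge : (W + 1).PosSemidef) :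
    let lam : ℝ := Real.sqrt (1 - Complex.normSq (∑ i, (starRingEnd ℂ) (ψ i) * φ i))
    let q : ℂ := (∑ i, (starRingEnd ℂ) (φ i) * Matrix.mulVec W φ i) *
      Matrix.trace (W * (rankOne ψ - rankOne φ))
    ((-(lam * (1 + lam)) : ℝ) : ℂ) ≤ q ∧
      (lam ≤ 1 / 2 → q ≤ ((lam * (1 - lam) : ℝ) : ℂ)) ∧
      (1 / 2 ≤ lam → lam ≤ 1 → q ≤ (1 / 4 : ℂ)) := by
  intro lam q
  have hlam : lam ^ 2 = 1 - Complex.normSq (star ψ ⬝ᵥ φ) :=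
    Real.sq_sqrt (sub_nonneg.2 (normSq_star_dotProduct_le_one hψ hφ))
  obtain ⟨a, σ, ρ, h, hA, hB⟩ :=
    exists_compressionBounds hφ hψ hW hWle hWge (Real.sqrt_nonneg _) hlam
  have hq : q = (a * (σ - lam ^ 2 * a + 2 * ρ) : ℝ) := by
    change star φ ⬝ᵥ W *ᵥ φ * _ = _
    rw [Matrix.mul_sub, trace_sub, trace_mul_rankOne, trace_mul_rankOne, hA, hB]
    push_cast
    ring
  rw [hq, show (1 / 4 : ℂ) = (1 / 4 : ℝ) by norm_num]
  simp only [Complex.real_le_real]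
  exact ⟨h.lower, h.upper, fun _ _ => h.le_quarter⟩

end
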